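/- Let K be a field and M ∈ Mat_m(K[x_1,...,x_n]). If M|_{x=y⁽ʳ⁾} ··· M|_{x=y⁽¹⁾} = 0 for fresh indeterminate tuples y⁽ⁱ⁾ but M|_{x=y⁽ʳ⁻¹⁾} ··· M|_{x=y⁽¹⁾} ≠ 0, then the columns of M are linearly dependent over K, i.e., there exists a nonzero vector v ∈ Kᵐ with M·v = 0. -/

import Mathlib

/-!
Write `P = M|_{x=y⁽ʳ⁻¹⁾} ⋯ M|_{x=y⁽¹⁾}`, so that `M|_{x=y⁽ʳ⁾} P = 0` and some column `w` of `P` is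
nonzero. The entries of `w` do not involve `y⁽ʳ⁾`, so viewing everything as polynomials in the
other variables with coefficients in `K[y⁽ʳ⁾]`, the matrix `M|_{x=y⁽ʳ⁾}` acts on `w` through
constants. Comparing the coefficients of a monomial at which `w` is nonzero therefore gives a
nonzero `v ∈ Kᵐ` with `M|_{x=y⁽ʳ⁾} v = 0`, and renaming `y⁽ʳ⁾` back to `x` gives `M v = 0`.
-/

open MvPolynomial

/-- Substitute the `i`-th fresh tuple of indeterminates for `x` in every entry of `M`. -/
noncomputable def substN {K : Type} [CommRing K] {n m : ℕ}
    (M : Matrix (Fin m) (Fin m) (MvPolynomial (Fin n) K)) (i : ℕ) :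
    Matrix (Fin m) (Fin m) (MvPolynomial (ℕ × Fin n) K) :=
  M.map (rename fun k => (i, k))

/-- The product `M|_{x=y⁽ʳ⁾} ⬝ ⋯ ⬝ M|_{x=y⁽¹⁾}` (fresh tuples indexed `r-1, …, 0`). -/
noncomputable def prodSubst {K : Type} [CommRing K] {n m : ℕ}
    (M : Matrix (Fin m) (Fin m) (MvPolynomial (Fin n) K)) (r : ℕ) :
    Matrix (Fin m) (Fin m) (MvPolynomial (ℕ × Fin n) K) :=
  ((List.range r).reverse.map (substN M)).prod

namespace MvPolynomial

variable {R K : Type*} [CommSemiring R] [CommSemiring K] {ι κ σ τ υ : Type*} [Fintype κ]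

theorem coeff_map_C_mulVec (A : Matrix ι κ R) (w : κ → MvPolynomial τ R) (d : τ →₀ ℕ) (i : ι) :
    coeff d ((A.map C).mulVec w i) = A.mulVec (fun j => coeff d (w j)) i := by
  simp only [Matrix.mulVec, dotProduct, Matrix.map_apply, coeff_sum, coeff_C_mul]

theorem exists_ne_zero_mulVec_eq_zero_of_map_C_mulVec_map [Algebra K R] (A : Matrix ι κ R)
    {w : κ → MvPolynomial τ K} (hw : w ≠ 0)
    (h : (A.map C).mulVec (fun j => map (algebraMap K R) (w j)) = 0) :
    ∃ v : κ → K, v ≠ 0 ∧ A.mulVec (fun j => algebraMap K R (v j)) = 0 := by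
  obtain ⟨j₀, hj₀⟩ := Function.ne_iff.mp hw
  obtain ⟨d, hd⟩ := ne_zero_iff.mp hj₀
  refine ⟨fun j => coeff d (w j), Function.ne_iff.mpr ⟨j₀, hd⟩, ?_⟩
  ext i
  simpa [coeff_map_C_mulVec, coeff_map] using congrArg (coeff d) (congrFun h i)

theorem sumAlgEquiv_rename_inl (p : MvPolynomial τ K) :
    sumAlgEquiv K τ σ (rename Sum.inl p) = map (algebraMap K (MvPolynomial σ K)) p :=
  DFunLike.congr_fun (sumAlgEquiv_comp_rename_inl K τ σ) p

theorem sumAlgEquiv_rename_inr (p : MvPolynomial σ K) :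
    sumAlgEquiv K τ σ (rename Sum.inr p) = C p :=
  DFunLike.congr_fun (sumAlgEquiv_comp_rename_inr K τ σ) p

theorem exists_ne_zero_mulVec_eq_zero_of_rename_mulVec_rename (A : Matrix ι κ (MvPolynomial σ K))
    {w : κ → MvPolynomial τ K} (hw : w ≠ 0) {f : τ ⊕ σ → υ} (hf : f.Injective)
    (h : (A.map (rename (f ∘ Sum.inr))).mulVec (fun j => rename (f ∘ Sum.inl) (w j)) = 0) :
    ∃ v : κ → K, v ≠ 0 ∧ A.mulVec (fun j => C (v j)) = 0 := by
  refine exists_ne_zero_mulVec_eq_zero_of_map_C_mulVec_map A hw ?_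
  ext i : 1
  have hsum : (A.map (rename Sum.inr)).mulVec (fun j => rename Sum.inl (w j)) i = 0 := by
    apply rename_injective f hf
    rw [map_zero, ← Pi.zero_apply (M := fun _ : ι => MvPolynomial υ K) i, ← h]
    simp only [Matrix.mulVec, dotProduct, Matrix.map_apply, map_sum, map_mul, rename_rename]
  simpa only [Matrix.mulVec, dotProduct, Matrix.map_apply, map_sum, map_mul, map_zero,
    Pi.zero_apply, sumAlgEquiv_rename_inl, sumAlgEquiv_rename_inr]
    using congrArg (sumAlgEquiv K τ σ) hsum

end MvPolynomial

section prodSubst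

variable {K : Type} [CommRing K] {n m : ℕ}

theorem prodSubst_succ (M : Matrix (Fin m) (Fin m) (MvPolynomial (Fin n) K)) (s : ℕ) :
    prodSubst M (s + 1) = substN M s * prodSubst M s := by
  simp [prodSubst, List.range_succ]

theorem rename_prodSubst_apply (M : Matrix (Fin m) (Fin m) (MvPolynomial (Fin n) K)) (s : ℕ)
    {g : ℕ × Fin n → ℕ × Fin n} (hg : ∀ i < s, ∀ k, g (i, k) = (i, k)) (a b : Fin m) :
    rename g (prodSubst M s a b) = prodSubst M s a b := by
  have hfix : (rename g).toRingHom.mapMatrix (prodSubst M s) = prodSubst M s := by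
    rw [prodSubst, map_list_prod, List.map_map]
    congr 1
    refine List.map_congr_left fun i hi => ?_
    have hi : i < s := by simpa using hi
    ext k l
    simp [substN, rename_rename, Function.comp_def, hg i hi]
  exact congrFun (congrFun hfix a) b

end prodSubst

/-- Variables `ℕ × Fin n` with the tuple `s` left free, and `Fin n` placed as that tuple. -/
def insertBlock (n s : ℕ) : (ℕ × Fin n) ⊕ Fin n → ℕ × Fin n :=
  Sum.elim (fun q => (if q.1 < s then q.1 else q.1 + 1, q.2)) fun k => (s, k)

theorem insertBlock_injective (n s : ℕ) : (insertBlock n s).Injective := by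
  refine Function.Injective.sumElim ?_ (fun k l h => (Prod.ext_iff.mp h).2) ?_
  · rintro ⟨i, k⟩ ⟨j, l⟩ h
    simp only [Prod.mk.injEq] at h ⊢
    exact ⟨by split_ifs at h <;> omega, h.2⟩
  · rintro ⟨i, k⟩ l h
    simp only [Prod.mk.injEq] at h
    split_ifs at h <;> omega

theorem stmt3 {K : Type} [Field K] {m n : ℕ}
    (M : Matrix (Fin m) (Fin m) (MvPolynomial (Fin n) K)) (r : ℕ)
    (h0 : prodSubst M r = 0)
    (h1 : prodSubst M (r - 1) ≠ 0) :
    ∃ v : Fin m → K, v ≠ 0 ∧ M.mulVec (fun i => C (v i)) = 0 := by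
  obtain _ | s := r
  · exact absurd h0 h1
  rw [prodSubst_succ] at h0
  obtain ⟨j, hj⟩ : ∃ j, (fun i => prodSubst M s i j) ≠ 0 := by
    by_contra! h
    exact h1 (Matrix.ext fun i j => congrFun (h j) i)
  refine MvPolynomial.exists_ne_zero_mulVec_eq_zero_of_rename_mulVec_rename M hj
    (insertBlock_injective n s) ?_
  have hfix : ∀ i < s, ∀ k, (insertBlock n s ∘ Sum.inl) (i, k) = (i, k) := by
    intro i hi k
    simp [insertBlock, hi]
  simp only [rename_prodSubst_apply M s hfix]
  ext i : 1
  exact congrFun (congrFun h0 i) j
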